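/- Let θ be an action of a discrete group G on a unital C*-algebra A, and embed A in the reduced crossed product A ⋊_r G. If a pure state f on A is equivalent to f∘θ_g for some g ≠ e, then f does not have a unique state extension to A ⋊_r G. -/

import Mathlib

/- Statement 3: let `θ` be an action of a discrete group `G` on a unital
C*-algebra `A`, and embed `A` in the reduced crossed product `A ⋊_r G`.  If a
pure state `f` on `A` is equivalent to `f ∘ θ_g` for some `g ≠ e`, then `f` does
not have a unique state extension to `A ⋊_r G`.  The reduced crossed product is
axiomatized as a unital C*-algebra `B` together with a unital embedding
`ι : A → B`, a unitary representation `T` of `G` in `B` implementing `θ`,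
generating `B`, and a faithful conditional expectation `E : B → A` annihilating
`ι(x) T_g` for `g ≠ e`; these data characterize `A ⋊_r G`. -/

open scoped ComplexOrder
open Filter Topology

section
variable {A : Type*} [NormedRing A] [StarRing A] [CStarRing A]
  [NormedAlgebra ℂ A] [StarModule ℂ A] [CompleteSpace A]

/-- A state on a unital C*-algebra. -/
def IsStateU (f : A → ℂ) : Prop :=
  IsLinearMap ℂ f ∧ f 1 = 1 ∧ ∀ x, 0 ≤ f (star x * x)

/-- A pure state: an extreme point of the state space. -/
def IsPureStateU (f : A → ℂ) : Prop :=
  IsStateU f ∧ ∀ g h : A → ℂ, IsStateU g → IsStateU h →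
    (∀ x, f x = (g x + h x) / 2) → g = h

/-- Unitary equivalence of states on a unital C*-algebra: `g = u* f u`, i.e.
`g(x) = f(u x u*)` for a unitary `u`. -/
def StatesEquivU (f g : A → ℂ) : Prop :=
  ∃ u : A, u ∈ unitary A ∧ ∀ x, g x = f (u * x * star u)

variable {B : Type*} [NormedRing B] [StarRing B] [CStarRing B]
  [NormedAlgebra ℂ B] [StarModule ℂ B] [CompleteSpace B]

/-- `(B, ι, T, E)` is (a copy of) the reduced crossed product of `A` by the
action `θ` of the discrete group `G`:  `ι` is a unital embedding of `A`, the
`T g` are unitaries implementing `θ` and representing `G`, together with `ι(A)`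
they generate `B`, and `E` is a (faithful, contractive, `A`-bimodular, positive)
conditional expectation onto `A` with `E(ι(x) T_g) = 0` for `g ≠ e`. -/
structure IsReducedCrossedProduct (G : Type*) [Group G]
    (θ : G → (A ≃⋆ₐ[ℂ] A)) (ι : A →⋆ₐ[ℂ] B) (T : G → B) (E : B →ₗ[ℂ] A) : Prop where
  θ_one : ∀ x : A, θ 1 x = x
  θ_mul : ∀ (g h : G) (x : A), θ (g * h) x = θ g (θ h x)
  inj : Function.Injective ι
  unitaryT : ∀ g, T g ∈ unitary B
  T_one : T 1 = 1
  T_mul : ∀ g h, T g * T h = T (g * h)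
  covariant : ∀ (g : G) (x : A), T g * ι x * star (T g) = ι (θ g x)
  generates :
    closure (Algebra.adjoin ℂ (Set.range ι ∪ Set.range T) : Set B) = Set.univ
  E_inv : ∀ x : A, E (ι x) = x
  E_vanish : ∀ (g : G), g ≠ 1 → ∀ x : A, E (ι x * T g) = 0
  E_bimodular : ∀ (x y : A) (b : B), E (ι x * b * ι y) = x * E b * y
  E_pos : ∀ b : B, ∃ c : A, E (star b * b) = star c * c
  E_contractive : ∀ b : B, ‖E b‖ ≤ ‖b‖
  E_faithful : ∀ b : B, E (star b * b) = 0 → b = 0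

theorem IsStateU.comp_positive_unital {C D : Type*} [NormedRing C] [StarRing C]
    [NormedAlgebra ℂ C] [NormedRing D] [StarRing D] [NormedAlgebra ℂ D] {f : C → ℂ} (hf : IsStateU f)
    (E : D →ₗ[ℂ] C) (hE1 : E 1 = 1) (hEpos : ∀ b : D, ∃ c : C, E (star b * b) = star c * c) :
    IsStateU (fun b => f (E b)) := by
  obtain ⟨hlin, h1, hpos⟩ := hf
  refine ⟨⟨fun a b => ?_, fun c a => ?_⟩, by simp only [hE1, h1], fun b => ?_⟩
  · simp only [map_add, hlin.map_add]
  · simp only [map_smul, hlin.map_smul]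
  · obtain ⟨c, hc⟩ := hEpos b
    simpa only [hc] using hpos c

theorem IsStateU.compress {C : Type*} [NormedRing C] [StarRing C] [NormedAlgebra ℂ C]
    {φ : C → ℂ} (hφ : IsStateU φ) (v : C) {c : ℂ} (hc : 0 ≤ c)
    (hv : c * φ (star v * v) = 1) :
    IsStateU (fun b => c * φ (star v * b * v)) := by
  obtain ⟨hlin, -, hpos⟩ := hφ
  refine ⟨⟨fun a b => ?_, fun r a => ?_⟩, by simpa only [mul_one] using hv, fun b => ?_⟩
  · simp only [mul_add, add_mul, hlin.map_add]
  · simp only [mul_smul_comm, smul_mul_assoc, hlin.map_smul, smul_eq_mul]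
    ring
  · have h := hpos (b * v)
    rw [star_mul, mul_assoc, ← mul_assoc (star b)] at h
    simpa only [mul_assoc] using mul_nonneg hc h

theorem IsLinearMap.map_star_one_add_smul_mul_mul {C : Type*} [Ring C] [StarRing C]
    [Algebra ℂ C] [StarModule ℂ C] {φ : C → ℂ} (hφ : IsLinearMap ℂ φ) {μ : ℂ}
    (hμ : star μ * μ = 1) (w b : C) :
    φ (star (1 + μ • w) * b * (1 + μ • w)) =
      φ b + μ * φ (b * w) + star μ * φ (star w * b) + φ (star w * b * w) := by
  have hexpand : star (1 + μ • w) * b * (1 + μ • w) =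
      b + μ • (b * w) + star μ • (star w * b) + star w * b * w := by
    simp only [star_add, star_one, star_smul, add_mul, mul_add, one_mul, mul_one, smul_mul_assoc,
      mul_smul_comm, smul_add]
    rw [smul_smul, mul_comm μ, hμ, one_smul]
    abel
  simp only [hexpand, hφ.map_add, hφ.map_smul, smul_eq_mul]

/-- The states `b ↦ φ((1 + μ w)* b (1 + μ w)) / 2`, `|μ| = 1`, all extend `f`, but their
values at `w` differ for `μ` and `-μ` by `μ φ(w²) + μ̄`, which cannot vanish for both
`μ = 1` and `μ = i`. -/
theorem IsStateU.not_existsUnique_extension_of_conj {C D : Type*} [NormedRing C]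
    [StarRing C] [NormedAlgebra ℂ C] [NormedRing D] [StarRing D] [NormedAlgebra ℂ D]
    [StarModule ℂ D] {ι : C →⋆ₐ[ℂ] D} {f : C → ℂ} {φ : D → ℂ}
    (hφ : IsStateU φ) (hφf : ∀ x, φ (ι x) = f x) {w : D}
    (hleft : ∀ x, φ (ι x * w) = 0) (hright : ∀ x, φ (star w * ι x) = 0)
    (hconj : ∀ x, φ (star w * ι x * w) = f x) :
    ¬ ∃! F : D → ℂ, IsStateU F ∧ ∀ x : C, F (ι x) = f x := by
  have hlin := hφ.1
  have hf1 : f 1 = 1 := by rw [← hφf, map_one, hφ.2.1]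
  set F : ℂ → D → ℂ := fun μ b => 2⁻¹ * φ (star (1 + μ • w) * b * (1 + μ • w))
  have hF : ∀ μ : ℂ, star μ * μ = 1 → IsStateU (F μ) ∧ ∀ x, F μ (ι x) = f x := by
    intro μ hμ
    have hext : ∀ x, φ (star (1 + μ • w) * ι x * (1 + μ • w)) = 2 * f x := fun x => by
      rw [hlin.map_star_one_add_smul_mul_mul hμ, hleft, hright, hconj, hφf]
      ring
    refine ⟨hφ.compress _ (by positivity) ?_, fun x => ?_⟩
    · have h := hext 1
      rw [map_one, mul_one, hf1] at h
      rw [h]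
      norm_num
    · change 2⁻¹ * _ = _
      rw [hext]
      ring
  have hww : φ (star w * w) = 1 := by simpa only [map_one, mul_one, hf1] using hconj 1
  rintro ⟨F₀, -, huniq⟩
  have hzero : ∀ μ : ℂ, star μ * μ = 1 → μ * φ (w * w) + star μ = 0 := fun μ hμ => by
    have hneg : star (-μ) * -μ = 1 := by rwa [star_neg, neg_mul_neg]
    have h := congrFun ((huniq _ (hF μ hμ)).trans (huniq _ (hF (-μ) hneg)).symm) w
    simp only [F, hlin.map_star_one_add_smul_mul_mul hμ, hlin.map_star_one_add_smul_mul_mul hneg,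
      hww, star_neg] at h
    linear_combination h
  have h1 := hzero 1 (by norm_num)
  have hI := hzero Complex.I (by simp)
  simp only [star_one, Complex.star_def, Complex.conj_I] at h1 hI
  have : (2 : ℂ) * Complex.I = 0 := by linear_combination Complex.I * h1 - hI
  simp at this

namespace IsReducedCrossedProduct

variable {C D : Type*} [NormedRing C] [StarRing C] [NormedAlgebra ℂ C] [NormedRing D]
  [StarRing D] [NormedAlgebra ℂ D] {G : Type*} [Group G] {θ : G → (C ≃⋆ₐ[ℂ] C)}
  {ι : C →⋆ₐ[ℂ] D} {T : G → D} {E : D →ₗ[ℂ] C}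

theorem E_one (hred : IsReducedCrossedProduct G θ ι T E) : E 1 = 1 := by
  rw [← map_one ι, hred.E_inv]

theorem T_inv (hred : IsReducedCrossedProduct G θ ι T E) (g : G) : T g⁻¹ = star (T g) :=
  (left_inv_eq_right_inv (Unitary.star_mul_self_of_mem (hred.unitaryT g))
    (by rw [hred.T_mul, mul_inv_cancel, hred.T_one])).symm

theorem T_mul_ι (hred : IsReducedCrossedProduct G θ ι T E) (g : G) (x : C) :
    T g * ι x = ι (θ g x) * T g := by
  rw [← hred.covariant, mul_assoc _ (star (T g)), Unitary.star_mul_self_of_mem (hred.unitaryT g),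
    mul_one]

theorem E_T_mul_ι (hred : IsReducedCrossedProduct G θ ι T E) {g : G} (hg : g ≠ 1) (x : C) :
    E (T g * ι x) = 0 := by
  rw [hred.T_mul_ι, hred.E_vanish g hg]

theorem star_ι_mul_T_inv (hred : IsReducedCrossedProduct G θ ι T E) (u : C) (g : G) :
    star (ι u * T g⁻¹) = T g * ι (star u) := by
  rw [star_mul, hred.T_inv, star_star, map_star]

theorem star_ι_mul_T_inv_mul_ι_mul (hred : IsReducedCrossedProduct G θ ι T E) (u : C) (g : G)
    (x : C) : star (ι u * T g⁻¹) * ι x * (ι u * T g⁻¹) = ι (θ g (star u * x * u)) := by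
  rw [hred.star_ι_mul_T_inv, hred.T_inv, ← hred.covariant]
  simp only [map_mul, mul_assoc]

end IsReducedCrossedProduct

theorem stmt_3 (G : Type*) [Group G] (θ : G → (A ≃⋆ₐ[ℂ] A))
    (ι : A →⋆ₐ[ℂ] B) (T : G → B) (E : B →ₗ[ℂ] A)
    (hred : IsReducedCrossedProduct G θ ι T E)
    (f : A → ℂ) (hf : IsPureStateU f)
    (g : G) (hg : g ≠ 1) (hequiv : StatesEquivU f (fun x => f (θ g x))) :
    ¬ ∃! F : B → ℂ, IsStateU F ∧ ∀ x : A, F (ι x) = f x := by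
  obtain ⟨u, hu, hfu⟩ := hequiv
  have hf0 : f 0 = 0 := hf.1.1.map_zero
  -- Take `w = ι(u) T_{g⁻¹}`: as `g ≠ e`, `E` kills `ι(x) w` and `w* ι(x)`, and `hequiv` says
  -- that conjugation by `w` preserves `f ∘ E` on `ι(A)`.
  refine (hf.1.comp_positive_unital E hred.E_one hred.E_pos).not_existsUnique_extension_of_conj
    (fun x => by rw [hred.E_inv]) (w := ι u * T g⁻¹) (fun x => ?_) (fun x => ?_) (fun x => ?_)
  · rw [← mul_assoc, ← map_mul, hred.E_vanish _ (inv_ne_one.mpr hg), hf0]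
  · rw [hred.star_ι_mul_T_inv, mul_assoc, ← map_mul, hred.E_T_mul_ι hg, hf0]
  · rw [hred.star_ι_mul_T_inv_mul_ι_mul, hred.E_inv]
    refine (hfu _).trans ?_
    rw [← mul_assoc, ← mul_assoc, Unitary.mul_star_self_of_mem hu, one_mul, mul_assoc,
      Unitary.mul_star_self_of_mem hu, mul_one]

end
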